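/- arXiv:2203.09972 — 6 statements merged into one kernel-verified Lean document; each statement's English description precedes it below -/
import Mathlib

section
/- Let c1, c2 > 0. The pair (q1, q2) with q1 = (sqrt(c2)/(sqrt(c1)+sqrt(c2))) * 1/sqrt(2*sqrt(c1*c2)) and q2 = (sqrt(c1)/(sqrt(c1)+sqrt(c2))) * 1/sqrt(2*sqrt(c1*c2)) is the unique solution with q1 > 0 and q2 > 0 of the system q2 - 2*c1*q1*(q1+q2)^2 = 0 and q1 - 2*c2*q2*(q1+q2)^2 = 0. -/
theorem nash_equilibrium_unique (c1 c2 : ℝ) (hc1 : 0 < c1) (hc2 : 0 < c2) :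
    ∀ q1 q2 : ℝ,
      (0 < q1 ∧ 0 < q2 ∧
        q2 - 2 * c1 * q1 * (q1 + q2) ^ 2 = 0 ∧
        q1 - 2 * c2 * q2 * (q1 + q2) ^ 2 = 0) ↔
      (q1 = (Real.sqrt c2 / (Real.sqrt c1 + Real.sqrt c2)) *
              (1 / Real.sqrt (2 * Real.sqrt (c1 * c2))) ∧
       q2 = (Real.sqrt c1 / (Real.sqrt c1 + Real.sqrt c2)) *
              (1 / Real.sqrt (2 * Real.sqrt (c1 * c2)))) := by
  intro q1 q2
  have hs1 : 0 < Real.sqrt c1 := Real.sqrt_pos.mpr hc1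
  have hs2 : 0 < Real.sqrt c2 := Real.sqrt_pos.mpr hc2
  set s1 := Real.sqrt c1 with hs1def
  set s2 := Real.sqrt c2 with hs2def
  have hs1sq : s1 ^ 2 = c1 := Real.sq_sqrt hc1.le
  have hs2sq : s2 ^ 2 = c2 := Real.sq_sqrt hc2.le
  have hmul : Real.sqrt (c1 * c2) = s1 * s2 := by
    rw [hs1def, hs2def, ← Real.sqrt_mul hc1.le]
  have hSpos : 0 < Real.sqrt (2 * Real.sqrt (c1 * c2)) := by
    apply Real.sqrt_pos.mpr
    rw [hmul]; positivity
  set S := Real.sqrt (2 * Real.sqrt (c1 * c2)) with hSdef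
  have hSsq : S ^ 2 = 2 * s1 * s2 := by
    rw [hSdef, Real.sq_sqrt (by rw [hmul]; positivity), hmul]; ring
  have hs12 : 0 < s1 + s2 := by linarith
  have hSne : S ≠ 0 := ne_of_gt hSpos
  have h12ne : s1 + s2 ≠ 0 := ne_of_gt hs12
  clear hmul hSdef hs1def hs2def
  clear_value s1 s2 S
  constructor
  · rintro ⟨hq1, hq2, h1, h2⟩
    have ht : 0 < q1 + q2 := by linarith
    have key : (4 * c1 * c2 * (q1 + q2) ^ 4 - 1) * (q1 * q2) = 0 := by
      linear_combination (-2 * c2 * q2 * (q1 + q2) ^ 2) * h1 - q2 * h2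
    have hqq : q1 * q2 ≠ 0 := ne_of_gt (mul_pos hq1 hq2)
    have ht4 : 4 * c1 * c2 * (q1 + q2) ^ 4 = 1 := by
      rcases mul_eq_zero.mp key with h | h
      · linarith
      · exact absurd h hqq
    have hX : ((q1 + q2) ^ 2 * (2 * s1 * s2)) ^ 2 = 1 := by
      linear_combination ht4 + 4 * (q1 + q2) ^ 4 * s2 ^ 2 * hs1sq
        + 4 * (q1 + q2) ^ 4 * c1 * hs2sq
    have hXpos : 0 < (q1 + q2) ^ 2 * (2 * s1 * s2) := by positivity
    have ht2 : (q1 + q2) ^ 2 * (2 * s1 * s2) = 1 := by nlinarith [hX, hXpos]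
    have htS : (q1 + q2) * S = 1 := by
      have h : ((q1 + q2) * S) ^ 2 = 1 := by
        linear_combination ht2 + (q1 + q2) ^ 2 * hSsq
      nlinarith [h, mul_pos ht hSpos]
    have hratio : s2 * q2 = s1 * q1 := by
      have h' : 2 * s1 * (s2 * q2) = 2 * s1 * (s1 * q1) := by
        linear_combination 2 * s1 * s2 * h1 + 2 * c1 * q1 * ht2 - 2 * q1 * hs1sq
      exact mul_left_cancel₀ (by positivity) h'
    constructor
    · rw [div_mul_div_comm, mul_one, eq_div_iff (by positivity)]
      linear_combination s2 * htS - S * hratio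
    · rw [div_mul_div_comm, mul_one, eq_div_iff (by positivity)]
      linear_combination s1 * htS + S * hratio
  · rintro ⟨hq1e, hq2e⟩
    subst hq1e hq2e
    have hq1 : 0 < s2 / (s1 + s2) * (1 / S) := by positivity
    have hq2 : 0 < s1 / (s1 + s2) * (1 / S) := by positivity
    have hsum : s2 / (s1 + s2) * (1 / S) + s1 / (s1 + s2) * (1 / S) = 1 / S := by
      field_simp
      ring
    refine ⟨hq1, hq2, ?_, ?_⟩
    · rw [hsum, div_pow, one_pow, hSsq]
      field_simp
      linear_combination hs1sq
    · rw [hsum, div_pow, one_pow, hSsq]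
      field_simp
      linear_combination hs2sq
end

section
/- Let c1, c2 > 0 and let (q1*, q2*) be the Nash equilibrium q1* = (sqrt(c2)/(sqrt(c1)+sqrt(c2))) * 1/sqrt(2*sqrt(c1*c2)), q2* = (sqrt(c1)/(sqrt(c1)+sqrt(c2))) * 1/sqrt(2*sqrt(c1*c2)). Then the marginal profit of firm 1 vanishes at this point, i.e., q2*/(q1*+q2*)^2 - 2*c1*q1* = 0. -/
theorem marginal_profit_vanishes_at_nash (c1 c2 : ℝ) (hc1 : 0 < c1) (hc2 : 0 < c2) :
    let q1 := (Real.sqrt c2 / (Real.sqrt c1 + Real.sqrt c2)) *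
                (1 / Real.sqrt (2 * Real.sqrt (c1 * c2)))
    let q2 := (Real.sqrt c1 / (Real.sqrt c1 + Real.sqrt c2)) *
                (1 / Real.sqrt (2 * Real.sqrt (c1 * c2)))
    q2 / (q1 + q2) ^ 2 - 2 * c1 * q1 = 0 := by
  intro q1 q2
  have hs1 : 0 < Real.sqrt c1 := Real.sqrt_pos.mpr hc1
  have hs2 : 0 < Real.sqrt c2 := Real.sqrt_pos.mpr hc2
  have ht : 0 < Real.sqrt (2 * Real.sqrt (c1 * c2)) := Real.sqrt_pos.mpr (by positivity)
  have hsum : 0 < Real.sqrt c1 + Real.sqrt c2 := by linarith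
  have hsq1 : Real.sqrt c1 ^ 2 = c1 := Real.sq_sqrt hc1.le
  have hsq2 : Real.sqrt c2 ^ 2 = c2 := Real.sq_sqrt hc2.le
  have ht2 : Real.sqrt (2 * Real.sqrt (c1 * c2)) ^ 2 = 2 * (Real.sqrt c1 * Real.sqrt c2) := by
    rw [Real.sq_sqrt (by positivity), Real.sqrt_mul hc1.le, ]
  simp only [q1, q2]
  generalize hT : Real.sqrt (2 * Real.sqrt (c1 * c2)) = t at ht ht2
  field_simp
  linear_combination ((Real.sqrt c1 + Real.sqrt c2)^2) *
    (Real.sqrt c1 * ht2 + 2 * Real.sqrt c2 * hsq1)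
end

section
/- Let c1, c2, K > 0 with c1*K + c2*K - 4 < 0. Consider Model GR with inverse demand p = 1/(q1+q2) and linear costs C_i(q) = c_i*q, whose Nash equilibrium is q1* = c2/(c1+c2)^2, q2* = c1/(c1+c2)^2. Then the equilibrium is locally stable: the derivative at q1* of the one-dimensional map q1 ↦ q1 + K*q1*(R2(q1)/(q1+R2(q1))^2 - c1), where R2(q1) = sqrt(q1/c2) - q1 is firm 2's best response, has absolute value strictly less than 1. -/
theorem GR_linear_cost_stability (c1 c2 K : ℝ) (hc1 : 0 < c1) (hc2 : 0 < c2)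
    (hK : 0 < K) (hstab : c1 * K + c2 * K - 4 < 0) :
    let R2 : ℝ → ℝ := fun q1 => Real.sqrt (q1 / c2) - q1
    let f : ℝ → ℝ := fun q1 =>
      q1 + K * q1 * (R2 q1 / (q1 + R2 q1) ^ 2 - c1)
    let q1star := c2 / (c1 + c2) ^ 2
    |deriv f q1star| < 1 := by
  intro R2 f q1star
  have ha : 0 < c1 + c2 := by linarith
  have hq : 0 < q1star := div_pos hc2 (by positivity)
  set g : ℝ → ℝ := fun x => x * (1 - K * (c1 + c2)) + K * Real.sqrt c2 * Real.sqrt x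
  have hsc2 : Real.sqrt c2 > 0 := Real.sqrt_pos.mpr hc2
  have hsc2sq : Real.sqrt c2 * Real.sqrt c2 = c2 := Real.mul_self_sqrt hc2.le
  -- f = g on positive reals
  have heq : ∀ x : ℝ, 0 < x → f x = g x := by
    intro x hx
    have hsx : Real.sqrt x > 0 := Real.sqrt_pos.mpr hx
    have hsxsq : Real.sqrt x * Real.sqrt x = x := Real.mul_self_sqrt hx.le
    have h1 : Real.sqrt (x / c2) = Real.sqrt x / Real.sqrt c2 := Real.sqrt_div hx.le c2
    have h2 : x + R2 x = Real.sqrt x / Real.sqrt c2 := by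
      simp only [R2, h1]; ring
    show x + K * x * (R2 x / (x + R2 x) ^ 2 - c1) = _
    rw [h2]
    simp only [R2, h1, g]
    field_simp
    linear_combination (-(x ^ 2 * K)) * hsc2sq + (x * K * c2 - Real.sqrt x * K * Real.sqrt c2) * hsxsq
  -- derivative of g at q1star
  have hsq1 : Real.sqrt q1star = Real.sqrt c2 / (c1 + c2) := by
    rw [show q1star = c2 / (c1 + c2) ^ 2 from rfl, Real.sqrt_div hc2.le,
      Real.sqrt_sq ha.le]
  have hg : HasDerivAt g (1 - K * (c1 + c2) / 2) q1star := by
    have h1 : HasDerivAt (fun x : ℝ => x * (1 - K * (c1 + c2)))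
        (1 - K * (c1 + c2)) q1star := by
      simpa using (hasDerivAt_id q1star).mul_const (1 - K * (c1 + c2))
    have h2 : HasDerivAt Real.sqrt (1 / (2 * Real.sqrt q1star)) q1star :=
      Real.hasDerivAt_sqrt hq.ne'
    have h3 := h1.add ((h2.const_mul (K * Real.sqrt c2)))
    refine HasDerivAt.congr_deriv h3 ?_
    rw [hsq1]
    field_simp
    ring
  -- transfer derivative to f
  have hfg : f =ᶠ[nhds q1star] g := by
    filter_upwards [IsOpen.mem_nhds isOpen_Ioi hq] with x hx
    exact heq x hx
  have hdf : deriv f q1star = 1 - K * (c1 + c2) / 2 := by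
    rw [Filter.EventuallyEq.deriv_eq hfg, hg.deriv]
  rw [hdf, abs_lt]
  constructor <;> nlinarith
end

section
/- Let c1, c2 > 0 and define q1* = (sqrt(c2)/(sqrt(c1)+sqrt(c2))) * 1/sqrt(2*sqrt(c1*c2)), q2* = (sqrt(c1)/(sqrt(c1)+sqrt(c2))) * 1/sqrt(2*sqrt(c1*c2)). Then (q1*, q2*) is a fixed point of the LMA map: q2* = (2*q2* + q1*)/(2*(1 + c2*(q1* + q2*)^2)). -/
theorem nash_is_LMA_fixed_point (c1 c2 : ℝ) (hc1 : 0 < c1) (hc2 : 0 < c2) :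
    let q1 := (Real.sqrt c2 / (Real.sqrt c1 + Real.sqrt c2)) *
                (1 / Real.sqrt (2 * Real.sqrt (c1 * c2)))
    let q2 := (Real.sqrt c1 / (Real.sqrt c1 + Real.sqrt c2)) *
                (1 / Real.sqrt (2 * Real.sqrt (c1 * c2)))
    q2 = (2 * q2 + q1) / (2 * (1 + c2 * (q1 + q2) ^ 2)) := by
  intro q1 q2
  have hs1 : 0 < Real.sqrt c1 := Real.sqrt_pos.mpr hc1
  have hs2 : 0 < Real.sqrt c2 := Real.sqrt_pos.mpr hc2
  have hmul : Real.sqrt (c1 * c2) = Real.sqrt c1 * Real.sqrt c2 :=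
    Real.sqrt_mul hc1.le c2
  have hR : 0 < Real.sqrt (2 * Real.sqrt (c1 * c2)) :=
    Real.sqrt_pos.mpr (by positivity)
  have hRsq : Real.sqrt (2 * Real.sqrt (c1 * c2)) ^ 2 = 2 * (Real.sqrt c1 * Real.sqrt c2) := by
    rw [Real.sq_sqrt (by positivity), hmul]
  have hc2sq : Real.sqrt c2 ^ 2 = c2 := Real.sq_sqrt hc2.le
  have hsum : 0 < Real.sqrt c1 + Real.sqrt c2 := by linarith
  simp only [q1, q2]
  set s1 := Real.sqrt c1
  set s2 := Real.sqrt c2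
  set R := Real.sqrt (2 * Real.sqrt (c1 * c2))
  have hden : 0 < 1 + c2 * ((s2 / (s1 + s2) * (1 / R)) + (s1 / (s1 + s2) * (1 / R))) ^ 2 := by
    positivity
  rw [eq_div_iff (by positivity)]
  field_simp
  linear_combination (-2*s1*(s1+s2)^2) * hc2sq + (-s2*(s1+s2)^2) * hRsq
end

section
/- Let c1, c2 > 0 with c1 > 4 or c2 > 3. For every K > 0, if c1*K + c2*K - 4 < 0 (linear-cost stability of Model GR) then 64*c1^3*c2*K^4 - 96*c1^2*c2*K^2 - 81*c1^2 + 18*c1*c2 - c2^2 < 0 (quadratic-cost stability of Model GR), and there exists K > 0 for which the quadratic-cost condition holds but the linear-cost condition fails. -/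
/-! The linear-cost region is `0 < K < 4 / (c1 + c2)`. The quadratic-cost polynomial is a convex
quadratic in `K ^ 2` with nonpositive constant term, so its negative set on `K > 0` is an interval
starting at `0`; containment and strictness therefore both reduce to its negativity at the endpoint
`K = 4 / (c1 + c2)`. Up to the factor `(c1 + c2) ^ 4` that value is
`512 c1² c2 (32 c1 - 3 (c1 + c2)²) - (9 c1 - c2)² (c1 + c2)⁴`, which is negative when
`32 c1 < 3 (c1 + c2)²` (this covers `c2 ≥ 3`) and, after bounding `9 c1 - c2 ≥ 8 c1`, also when
`c2 ≤ c1` and `c1 ≥ 4`. -/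

theorem quadratic_neg_of_le_of_neg {a b c x y : ℝ} (ha : 0 ≤ a) (hc : c ≤ 0) (hx : 0 < x)
    (hxy : x ≤ y) (hy : a * y ^ 2 + b * y + c < 0) : a * x ^ 2 + b * x + c < 0 := by
  have hconv : y * (a * x ^ 2 + b * x + c) ≤ x * (a * y ^ 2 + b * y + c) := by
    nlinarith [mul_nonneg (mul_nonneg ha (hx.le.trans hxy)) (mul_nonneg hx.le (sub_nonneg.2 hxy)),
      mul_nonneg (neg_nonneg.2 hc) (sub_nonneg.2 hxy)]
  nlinarith [mul_neg_of_pos_of_neg hx hy, hx.trans_le hxy]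

namespace GR

variable {c1 c2 : ℝ}

def stabPoly (c1 c2 K : ℝ) : ℝ :=
  64 * c1 ^ 3 * c2 * K ^ 4 - 96 * c1 ^ 2 * c2 * K ^ 2 - 81 * c1 ^ 2 + 18 * c1 * c2 - c2 ^ 2

def boundaryPoly (c1 c2 : ℝ) : ℝ :=
  16384 * c1 ^ 3 * c2 - 1536 * c1 ^ 2 * c2 * (c1 + c2) ^ 2 - (9 * c1 - c2) ^ 2 * (c1 + c2) ^ 4

theorem stabPoly_neg_of_le {K K₀ : ℝ} (hc1 : 0 ≤ c1) (hc2 : 0 ≤ c2) (hK : 0 < K) (hKK₀ : K ≤ K₀)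
    (hK₀ : stabPoly c1 c2 K₀ < 0) : stabPoly c1 c2 K < 0 := by
  have hquad (x : ℝ) : stabPoly c1 c2 x =
      64 * c1 ^ 3 * c2 * (x ^ 2) ^ 2 + -(96 * c1 ^ 2 * c2) * x ^ 2 + -(9 * c1 - c2) ^ 2 := by
    unfold stabPoly; ring
  rw [hquad] at hK₀ ⊢
  exact quadratic_neg_of_le_of_neg (by positivity) (neg_nonpos.2 (sq_nonneg _)) (by positivity)
    (pow_le_pow_left₀ hK.le hKK₀ 2) hK₀

theorem stabPoly_four_div (hs : 0 < c1 + c2) :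
    stabPoly c1 c2 (4 / (c1 + c2)) = boundaryPoly c1 c2 / (c1 + c2) ^ 4 := by
  unfold stabPoly boundaryPoly
  field_simp
  ring

theorem boundaryPoly_eq : boundaryPoly c1 c2 =
    512 * c1 ^ 2 * c2 * (32 * c1 - 3 * (c1 + c2) ^ 2) - (9 * c1 - c2) ^ 2 * (c1 + c2) ^ 4 := by
  unfold boundaryPoly; ring

theorem boundaryPoly_neg_of_lt (hc1 : 0 < c1) (hc2 : 0 < c2)
    (h : 32 * c1 < 3 * (c1 + c2) ^ 2) : boundaryPoly c1 c2 < 0 := by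
  have hfirst : 512 * c1 ^ 2 * c2 * (32 * c1 - 3 * (c1 + c2) ^ 2) < 0 :=
    mul_neg_of_pos_of_neg (by positivity) (by linarith)
  rw [boundaryPoly_eq]
  nlinarith [mul_nonneg (sq_nonneg (9 * c1 - c2)) (pow_nonneg (sq_nonneg (c1 + c2)) 2)]

theorem pow_four_add_sub_pos (hc1 : 4 ≤ c1) (hc2 : 0 < c2) :
    0 < (c1 + c2) ^ 4 + 24 * c2 * (c1 + c2) ^ 2 - 256 * c1 * c2 := by
  obtain ⟨t, ht, rfl⟩ : ∃ t, 0 ≤ t ∧ c1 = 4 + t := ⟨c1 - 4, by linarith, by ring⟩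
  have hexp : (4 + t + c2) ^ 4 + 24 * c2 * (4 + t + c2) ^ 2 - 256 * (4 + t) * c2 =
      32 * ((3 * c2 - 2) ^ 2 + 4) + 40 * c2 ^ 3 + c2 ^ 4
        + t * (256 + 128 * c2 + 96 * c2 ^ 2 + 4 * c2 ^ 3)
        + t ^ 2 * (6 * (4 + c2) ^ 2 + 24 * c2) + 4 * (4 + c2) * t ^ 3 + t ^ 4 := by
    ring
  rw [hexp]
  positivity

theorem boundaryPoly_neg_of_le (hc1 : 4 ≤ c1) (hc2 : 0 < c2) (h21 : c2 ≤ c1) :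
    boundaryPoly c1 c2 < 0 := by
  have hsq : (8 * c1) ^ 2 ≤ (9 * c1 - c2) ^ 2 := pow_le_pow_left₀ (by linarith) (by linarith) 2
  calc boundaryPoly c1 c2
      ≤ 512 * c1 ^ 2 * c2 * (32 * c1 - 3 * (c1 + c2) ^ 2) - (8 * c1) ^ 2 * (c1 + c2) ^ 4 := by
        rw [boundaryPoly_eq]
        gcongr
    _ = -(64 * c1 ^ 2) * ((c1 + c2) ^ 4 + 24 * c2 * (c1 + c2) ^ 2 - 256 * c1 * c2) := by ring
    _ < 0 := mul_neg_of_neg_of_pos (by nlinarith) (pow_four_add_sub_pos hc1 hc2)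

theorem boundaryPoly_neg (hc1 : 0 < c1) (hc2 : 0 < c2) (h : 4 < c1 ∨ 3 < c2) :
    boundaryPoly c1 c2 < 0 := by
  rcases le_or_gt 3 c2 with h3 | h3
  · exact boundaryPoly_neg_of_lt hc1 hc2 (by nlinarith [sq_nonneg (3 * c1 - 7)])
  · have h4 : 4 < c1 := h.resolve_right h3.not_gt
    exact boundaryPoly_neg_of_le h4.le hc2 (by linarith)

end GR

open GR in
theorem GR_strict_containment (c1 c2 : ℝ) (hc1 : 0 < c1) (hc2 : 0 < c2)
    (h : 4 < c1 ∨ 3 < c2) :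
    (∀ K : ℝ, 0 < K → c1 * K + c2 * K - 4 < 0 →
      64 * c1 ^ 3 * c2 * K ^ 4 - 96 * c1 ^ 2 * c2 * K ^ 2
        - 81 * c1 ^ 2 + 18 * c1 * c2 - c2 ^ 2 < 0) ∧
    (∃ K : ℝ, 0 < K ∧
      64 * c1 ^ 3 * c2 * K ^ 4 - 96 * c1 ^ 2 * c2 * K ^ 2
        - 81 * c1 ^ 2 + 18 * c1 * c2 - c2 ^ 2 < 0 ∧
      ¬ (c1 * K + c2 * K - 4 < 0)) := by
  have hs : 0 < c1 + c2 := by positivity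
  have hK₀ : stabPoly c1 c2 (4 / (c1 + c2)) < 0 := by
    rw [stabPoly_four_div hs]
    exact div_neg_of_neg_of_pos (boundaryPoly_neg hc1 hc2 h) (by positivity)
  refine ⟨fun K hK hlin => ?_, 4 / (c1 + c2), by positivity, hK₀, ?_⟩
  · have hKK₀ : K ≤ 4 / (c1 + c2) := by
      rw [le_div_iff₀ hs]
      linarith
    exact stabPoly_neg_of_le hc1.le hc2.le hK hKK₀ hK₀
  · have hboundary : c1 * (4 / (c1 + c2)) + c2 * (4 / (c1 + c2)) = 4 := by
      field_simp
    rw [hboundary]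
    norm_num
end

section
/- Let c1, c2 > 0. The unique fixed point with q1, q2 > 0 of the two-dimensional LMA-type system given by q1 = (2*q1 + q2)/(2*(1 + c1*(q1+q2)^2)) and q2 = (2*q2 + q1)/(2*(1 + c2*(q1+q2)^2)) is the Nash equilibrium q1* = (sqrt(c2)/(sqrt(c1)+sqrt(c2))) * 1/sqrt(2*sqrt(c1*c2)), q2* = (sqrt(c1)/(sqrt(c1)+sqrt(c2))) * 1/sqrt(2*sqrt(c1*c2)). -/
theorem LMA_fixed_point_unique (c1 c2 : ℝ) (hc1 : 0 < c1) (hc2 : 0 < c2) :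
    ∀ q1 q2 : ℝ,
      (0 < q1 ∧ 0 < q2 ∧
        q1 = (2 * q1 + q2) / (2 * (1 + c1 * (q1 + q2) ^ 2)) ∧
        q2 = (2 * q2 + q1) / (2 * (1 + c2 * (q1 + q2) ^ 2))) ↔
      (q1 = (Real.sqrt c2 / (Real.sqrt c1 + Real.sqrt c2)) *
              (1 / Real.sqrt (2 * Real.sqrt (c1 * c2))) ∧
       q2 = (Real.sqrt c1 / (Real.sqrt c1 + Real.sqrt c2)) *
              (1 / Real.sqrt (2 * Real.sqrt (c1 * c2)))) := by
  set a := Real.sqrt c1 with ha_def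
  set b := Real.sqrt c2 with hb_def
  have ha : 0 < a := Real.sqrt_pos.mpr hc1
  have hb : 0 < b := Real.sqrt_pos.mpr hc2
  have ha2 : a ^ 2 = c1 := Real.sq_sqrt hc1.le
  have hb2 : b ^ 2 = c2 := Real.sq_sqrt hc2.le
  have habeq : Real.sqrt (c1 * c2) = a * b := by
    rw [ha_def, hb_def, ← Real.sqrt_mul hc1.le]
  set s := Real.sqrt (2 * Real.sqrt (c1 * c2)) with hs_def
  have hs : 0 < s := Real.sqrt_pos.mpr (by rw [habeq]; positivity)
  have hs2 : s ^ 2 = 2 * (a * b) := by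
    rw [hs_def, habeq]; exact Real.sq_sqrt (by positivity)
  have habp : 0 < a + b := by linarith
  clear_value a b s
  clear ha_def hb_def hs_def habeq
  intro q1 q2
  constructor
  · rintro ⟨hq1, hq2, h3, h4⟩
    rw [eq_div_iff (by positivity)] at h3 h4
    have e1 : q2 = 2 * c1 * q1 * (q1 + q2) ^ 2 := by linear_combination -h3
    have e2 : q1 = 2 * c2 * q2 * (q1 + q2) ^ 2 := by linear_combination -h4
    have key : q1 * (4 * c1 * c2 * (q1 + q2) ^ 4) = q1 * 1 := by
      linear_combination -e2 - 2*c2*(q1+q2)^2 * e1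
    have key2 : 4 * c1 * c2 * (q1 + q2) ^ 4 = 1 := mul_left_cancel₀ hq1.ne' key
    have key3 : (2 * (a * b) * (q1 + q2) ^ 2) ^ 2 = 1 := by
      linear_combination key2 + 4*(q1+q2)^4*a^2*hb2 + 4*(q1+q2)^4*c2*ha2
    have hX : 0 < 2 * (a * b) * (q1 + q2) ^ 2 := by positivity
    have h1 : 2 * (a * b) * (q1 + q2) ^ 2 = 1 := by nlinarith [key3, hX]
    have hSs : (q1 + q2) * s = 1 := by
      have h2 : ((q1 + q2) * s) ^ 2 = 1 := by linear_combination h1 + (q1+q2)^2 * hs2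
      nlinarith [h2, mul_pos (by linarith : (0:ℝ) < q1 + q2) hs]
    have hba : b * q2 = a * q1 := by
      linear_combination b * e1 + a * q1 * h1 - 2 * b * q1 * (q1+q2)^2 * ha2
    constructor
    · rw [div_mul_div_comm, eq_div_iff (by positivity), mul_one]
      linear_combination b * hSs - s * hba
    · rw [div_mul_div_comm, eq_div_iff (by positivity), mul_one]
      linear_combination a * hSs + s * hba
  · rintro ⟨rfl, rfl⟩
    refine ⟨by positivity, by positivity, ?_, ?_⟩
    · rw [← ha2, eq_div_iff (by positivity)]
      field_simp
      linear_combination (-(a*(a+b)^2)) * hs2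
    · rw [← hb2, eq_div_iff (by positivity)]
      field_simp
      linear_combination (-(b*(a+b)^2)) * hs2
end
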